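/- Let P and Q be finite subsets of ℝ², each in general position (no three points collinear), and let σ : P → Q be a bijection that preserves the sign of the orientation determinant of every triple of distinct points. Then for any subsets P₁, P₂ ⊆ P, the convex hulls conv(P₁) and conv(P₂) are disjoint if and only if conv(σ(P₁)) and conv(σ(P₂)) are disjoint. -/

import Mathlib

/-- Orientation determinant of an ordered triple of points in the plane. -/
def odet (x y z : Fin 2 → ℝ) : ℝ :=
  Matrix.det !![1, 1, 1; x 0, y 0, z 0; x 1, y 1, z 1]

/-- A finite planar point set is in general position if no three of its points are collinear. -/
def GenPos (S : Finset (Fin 2 → ℝ)) : Prop :=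
  ∀ p ∈ S, ∀ q ∈ S, ∀ r ∈ S, p ≠ q → p ≠ r → q ≠ r →
    ¬ Collinear ℝ ({p, q, r} : Set (Fin 2 → ℝ))

/-
When `P` is in general position, the hulls of `P₁, P₂ ⊆ P` are disjoint iff one of them is
empty, or `P₁` and `P₂` are disjoint and the line through some `p ∈ P₂` and `q ∈ P₁` has `P₁`
weakly on its left and `P₂` weakly on its right. This condition only involves signs of
orientation determinants of points of `P`, so it is transported by `σ`.

If the hulls are disjoint, a Hahn–Banach functional is negative on the difference set `P₁ - P₂`,
and an extreme ray `q - p` of the cone it spans gives the line. Conversely, by general position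
such a line meets the hull of `P₁` only in `q` and that of `P₂` only in `p`.
-/

open Set

lemma odet_eq_cross (x y z : Fin 2 → ℝ) :
    odet x y z = (y 0 - x 0) * (z 1 - x 1) - (y 1 - x 1) * (z 0 - x 0) := by
  simp [odet, Matrix.det_fin_three]; ring

lemma odet_swap (x y z : Fin 2 → ℝ) : odet y x z = -odet x y z := by
  rw [odet_eq_cross, odet_eq_cross]; ring

lemma odet_self_left (x z : Fin 2 → ℝ) : odet x x z = 0 := by rw [odet_eq_cross]; ring

lemma odet_self_outer (x y : Fin 2 → ℝ) : odet x y x = 0 := by rw [odet_eq_cross]; ring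

lemma odet_self_right (x y : Fin 2 → ℝ) : odet x y y = 0 := by rw [odet_eq_cross]; ring

lemma odet_zero_sub_sub (p q a b : Fin 2 → ℝ) :
    odet 0 (q - p) (a - b) = odet p q a - odet p q b := by
  simp only [odet_eq_cross, Pi.zero_apply, Pi.sub_apply]; ring

def odetAffineMap (p q : Fin 2 → ℝ) : (Fin 2 → ℝ) →ᵃ[ℝ] ℝ where
  toFun := odet p q
  linear := (q 0 - p 0) • LinearMap.proj 1 - (q 1 - p 1) • LinearMap.proj 0
  map_vadd' y v := by
    simp only [odet_eq_cross, vadd_eq_add, Pi.add_apply, LinearMap.sub_apply, LinearMap.smul_apply,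
      LinearMap.coe_proj, Function.eval, smul_eq_mul]
    ring

@[simp]
lemma coe_odetAffineMap (p q : Fin 2 → ℝ) : ⇑(odetAffineMap p q) = odet p q := rfl

lemma collinear_of_odet_eq_zero {p q r : Fin 2 → ℝ} (hpq : p ≠ q) (h : odet p q r = 0) :
    Collinear ℝ ({p, q, r} : Set (Fin 2 → ℝ)) := by
  rw [odet_eq_cross] at h
  have hn : (q 0 - p 0) ^ 2 + (q 1 - p 1) ^ 2 ≠ 0 := by
    intro h0
    apply hpq
    ext i; fin_cases i <;> simp <;> nlinarith [sq_nonneg (q 0 - p 0), sq_nonneg (q 1 - p 1)]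
  -- `r` is its own orthogonal projection onto the line `pq`
  have hr : r = AffineMap.lineMap p q (((q 0 - p 0) * (r 0 - p 0) + (q 1 - p 1) * (r 1 - p 1)) /
      ((q 0 - p 0) ^ 2 + (q 1 - p 1) ^ 2)) := by
    ext i; fin_cases i <;> simp [AffineMap.lineMap_apply] <;> field_simp
    · linear_combination (-(q 1 - p 1)) * h
    · linear_combination (q 0 - p 0) * h
  have hcol :=
    collinear_insert_of_mem_affineSpan_pair (hr ▸ AffineMap.lineMap_mem_affineSpan_pair _ p q)
  rwa [insert_comm, pair_comm] at hcol

lemma GenPos.odet_ne_zero {P : Finset (Fin 2 → ℝ)} (hP : GenPos P) {p q r : Fin 2 → ℝ}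
    (hp : p ∈ P) (hq : q ∈ P) (hr : r ∈ P) (hpq : p ≠ q) (hpr : p ≠ r) (hqr : q ≠ r) :
    odet p q r ≠ 0 :=
  fun h => hP p hp q hq r hr hpq hpr hqr (collinear_of_odet_eq_zero hpq h)

lemma exists_forall_odet_nonneg_of_forall_neg {T : Set (Fin 2 → ℝ)} (hT : T.Finite)
    (hne : T.Nonempty) (f : (Fin 2 → ℝ) →ₗ[ℝ] ℝ) (hf : ∀ v ∈ T, f v < 0) :
    ∃ w ∈ T, ∀ v ∈ T, 0 ≤ odet 0 w v := by
  set c₀ := f (Pi.single 0 1)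
  set c₁ := f (Pi.single 1 1)
  have hcoord : ∀ v, f v = c₀ * v 0 + c₁ * v 1 := by
    intro v
    have hv : v = v 0 • Pi.single 0 1 + v 1 • Pi.single 1 1 := by
      ext i; fin_cases i <;> simp
    conv_lhs => rw [hv]
    simp [c₀, c₁, mul_comm]
  -- `g` is `f` turned by a quarter, so `g / f` is monotone in the angle on the half-plane `f < 0`
  set g : (Fin 2 → ℝ) → ℝ := fun v => c₀ * v 1 - c₁ * v 0
  have lagrange : ∀ w v, (c₀ ^ 2 + c₁ ^ 2) * odet 0 w v = f w * g v - g w * f v := by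
    intro w v; simp only [odet_eq_cross, hcoord, g, Pi.zero_apply]; ring
  obtain ⟨w, hw, hmin⟩ := exists_min_image T (fun v => g v / f v) hT hne
  refine ⟨w, hw, fun v hv => ?_⟩
  have hfw := hf w hw
  have hfv := hf v hv
  have hk : 0 < c₀ ^ 2 + c₁ ^ 2 := by
    by_contra! hk
    have : c₀ = 0 ∧ c₁ = 0 := by constructor <;> nlinarith [sq_nonneg c₀, sq_nonneg c₁]
    simp [hcoord, this] at hfw
  refine nonneg_of_mul_nonneg_right ?_ hk
  have hslope : g w / f w ≤ g v / f v := hmin v hv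
  have hcross : f w * g v - g w * f v = (g v / f v - g w / f w) * (f w * f v) := by
    field_simp [hfw.ne, hfv.ne]
  rw [lagrange, hcross]
  exact mul_nonneg (sub_nonneg.2 hslope) (mul_pos_of_neg_of_neg hfw hfv).le

lemma eq_of_mem_convexHull_of_apply_le {E : Type*} [AddCommGroup E] [Module ℝ E] {s : Set E}
    {q x : E} (φ : E →ᵃ[ℝ] ℝ) (hs : ∀ a ∈ s, a ≠ q → φ q < φ a) (hx : x ∈ convexHull ℝ s)
    (hφx : φ x ≤ φ q) : x = q := by
  rcases (s \ {q}).eq_empty_or_nonempty with h | hne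
  · simpa using convexHull_mono (sdiff_eq_empty.1 h) hx
  have hx' := convexHull_mono (subset_insert_sdiff_singleton q s) hx
  rw [convexHull_insert hne, convexJoin_singleton_left, mem_iUnion₂] at hx'
  obtain ⟨y, hy, hxy⟩ := hx'
  have hφy : φ q < φ y :=
    convexHull_min (fun a ha => hs a ha.1 ha.2) ((convex_Ioi _).affine_preimage φ) hy
  rw [segment_eq_image_lineMap] at hxy
  obtain ⟨θ, ⟨hθ, -⟩, rfl⟩ := hxy
  rw [AffineMap.apply_lineMap, AffineMap.lineMap_apply_module, smul_eq_mul, smul_eq_mul] at hφx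
  have : θ = 0 := by nlinarith
  simp [this]

def LineSeparated (P₁ P₂ : Set (Fin 2 → ℝ)) : Prop :=
  Disjoint P₁ P₂ ∧ ∃ p ∈ P₂, ∃ q ∈ P₁, (∀ a ∈ P₁, 0 ≤ odet p q a) ∧ ∀ b ∈ P₂, 0 ≤ odet q p b

lemma lineSeparated_of_disjoint_convexHull {P₁ P₂ : Set (Fin 2 → ℝ)} (h₁ : P₁.Finite)
    (h₂ : P₂.Finite) (hne₁ : P₁.Nonempty) (hne₂ : P₂.Nonempty)
    (h : Disjoint (convexHull ℝ P₁) (convexHull ℝ P₂)) : LineSeparated P₁ P₂ := by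
  obtain ⟨f, u, v, hfu, huv, hvf⟩ := geometric_hahn_banach_compact_closed
    (convex_convexHull ℝ P₁) (h₁.isCompact_convexHull (𝕜 := ℝ)) (convex_convexHull ℝ P₂)
    (h₂.isCompact_convexHull (𝕜 := ℝ)).isClosed h
  -- `q - p` spans an extreme ray of the cone over `P₁ - P₂`, on which the functional is negative
  obtain ⟨_, ⟨q, hq, p, hp, rfl⟩, hw⟩ := exists_forall_odet_nonneg_of_forall_neg
    (h₁.image2 (· - ·) h₂) (hne₁.image2 hne₂) f <| by
      rintro _ ⟨a, ha, b, hb, rfl⟩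
      have := hfu a (subset_convexHull ℝ _ ha)
      have := hvf b (subset_convexHull ℝ _ hb)
      simp only [ContinuousLinearMap.coe_coe, map_sub]
      linarith
  have hsep : ∀ a ∈ P₁, ∀ b ∈ P₂, odet p q b ≤ odet p q a := fun a ha b hb => by
    have := hw _ (mem_image2_of_mem ha hb)
    rw [odet_zero_sub_sub] at this
    linarith
  refine ⟨h.mono (subset_convexHull ℝ _) (subset_convexHull ℝ _), p, hp, q, hq,
    fun a ha => ?_, fun b hb => ?_⟩
  · simpa [odet_self_outer] using hsep a ha p hp
  · rw [odet_swap]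
    simpa [odet_self_right] using hsep q hq b hb

lemma eq_of_mem_convexHull_of_odet_nonpos {P : Finset (Fin 2 → ℝ)} (hP : GenPos P)
    {S : Set (Fin 2 → ℝ)} (hS : S ⊆ P) {p q x : Fin 2 → ℝ} (hp : p ∈ P) (hpS : p ∉ S)
    (hq : q ∈ S) (hSq : ∀ a ∈ S, 0 ≤ odet p q a) (hx : x ∈ convexHull ℝ S)
    (hxq : odet p q x ≤ 0) : x = q := by
  refine eq_of_mem_convexHull_of_apply_le (odetAffineMap p q) (fun a ha haq => ?_) hx
    (by simpa [odet_self_right])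
  have hpa : p ≠ a := fun h => hpS (h ▸ ha)
  have hpq : p ≠ q := fun h => hpS (h ▸ hq)
  simpa [odet_self_right] using
    (hSq a ha).lt_of_ne (hP.odet_ne_zero hp (hS hq) (hS ha) hpq hpa (Ne.symm haq)).symm

lemma disjoint_convexHull_of_lineSeparated {P : Finset (Fin 2 → ℝ)} (hP : GenPos P)
    {P₁ P₂ : Set (Fin 2 → ℝ)} (h₁ : P₁ ⊆ P) (h₂ : P₂ ⊆ P) (h : LineSeparated P₁ P₂) :
    Disjoint (convexHull ℝ P₁) (convexHull ℝ P₂) := by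
  obtain ⟨hdisj, p, hp, q, hq, hP₁, hP₂⟩ := h
  have hp₁ : p ∉ P₁ := fun h => disjoint_left.1 hdisj h hp
  have hq₂ : q ∉ P₂ := fun h => disjoint_left.1 hdisj hq h
  have eq_q_of := fun {x} => eq_of_mem_convexHull_of_odet_nonpos hP h₁ (h₂ hp) hp₁ hq hP₁ (x := x)
  have eq_p_of := fun {x} => eq_of_mem_convexHull_of_odet_nonpos hP h₂ (h₁ hq) hq₂ hp hP₂ (x := x)
  refine disjoint_left.2 fun x hx₁ hx₂ => hq₂ ?_
  rcases le_total (odet p q x) 0 with hx | hx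
  · have hxq := eq_q_of hx₁ hx
    exact eq_p_of (hxq ▸ hx₂) (odet_self_outer q p).le ▸ hp
  · have hxp := eq_p_of hx₂ (by rw [odet_swap]; linarith)
    exact eq_q_of (hxp ▸ hx₁) (odet_self_outer p q).le ▸ hp

theorem disjoint_convexHull_iff {P : Finset (Fin 2 → ℝ)} (hP : GenPos P)
    {P₁ P₂ : Set (Fin 2 → ℝ)} (h₁ : P₁ ⊆ P) (h₂ : P₂ ⊆ P) :
    Disjoint (convexHull ℝ P₁) (convexHull ℝ P₂) ↔ P₁ = ∅ ∨ P₂ = ∅ ∨ LineSeparated P₁ P₂ := by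
  refine ⟨fun h => ?_, ?_⟩
  · rcases P₁.eq_empty_or_nonempty with he₁ | hne₁
    · exact Or.inl he₁
    rcases P₂.eq_empty_or_nonempty with he₂ | hne₂
    · exact Or.inr (Or.inl he₂)
    exact Or.inr (Or.inr (lineSeparated_of_disjoint_convexHull (P.finite_toSet.subset h₁)
      (P.finite_toSet.subset h₂) hne₁ hne₂ h))
  · rintro (rfl | rfl | h)
    · rw [convexHull_empty]; exact empty_disjoint _
    · rw [convexHull_empty]; exact disjoint_empty _
    · exact disjoint_convexHull_of_lineSeparated hP h₁ h₂ h

lemma Real.nonneg_iff_of_sign_eq {a b : ℝ} (h : Real.sign a = Real.sign b) : 0 ≤ a ↔ 0 ≤ b := by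
  have key : ∀ r : ℝ, 0 ≤ r ↔ Real.sign r ≠ -1 := by
    intro r
    rcases lt_trichotomy r 0 with hr | rfl | hr
    · simp [Real.sign_of_neg hr, hr.not_ge]
    · simp
    · simp [Real.sign_of_pos hr, hr.le]; norm_num
  rw [key, key, h]

lemma odet_nonneg_iff_of_sign_eq {P : Set (Fin 2 → ℝ)} {σ : (Fin 2 → ℝ) → (Fin 2 → ℝ)}
    (hor : ∀ x ∈ P, ∀ y ∈ P, ∀ z ∈ P, x ≠ y → x ≠ z → y ≠ z →
      Real.sign (odet x y z) = Real.sign (odet (σ x) (σ y) (σ z)))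
    {x y z : Fin 2 → ℝ} (hx : x ∈ P) (hy : y ∈ P) (hz : z ∈ P) :
    0 ≤ odet (σ x) (σ y) (σ z) ↔ 0 ≤ odet x y z := by
  by_cases hxy : x = y
  · simp [hxy, odet_self_left]
  by_cases hxz : x = z
  · simp [hxz, odet_self_outer]
  by_cases hyz : y = z
  · simp [hyz, odet_self_right]
  exact (Real.nonneg_iff_of_sign_eq (hor x hx y hy z hz hxy hxz hyz)).symm

lemma lineSeparated_image_iff {P : Set (Fin 2 → ℝ)} {σ : (Fin 2 → ℝ) → (Fin 2 → ℝ)}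
    (hσ : InjOn σ P) (hor : ∀ x ∈ P, ∀ y ∈ P, ∀ z ∈ P, x ≠ y → x ≠ z → y ≠ z →
      Real.sign (odet x y z) = Real.sign (odet (σ x) (σ y) (σ z)))
    {P₁ P₂ : Set (Fin 2 → ℝ)} (h₁ : P₁ ⊆ P) (h₂ : P₂ ⊆ P) :
    LineSeparated (σ '' P₁) (σ '' P₂) ↔ LineSeparated P₁ P₂ := by
  have hdisj : Disjoint (σ '' P₁) (σ '' P₂) ↔ Disjoint P₁ P₂ := by
    simp only [disjoint_iff_inter_eq_empty, ← hσ.image_inter h₁ h₂, image_eq_empty]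
  simp only [LineSeparated, exists_mem_image, forall_mem_image]
  refine and_congr hdisj (exists_congr fun p => and_congr_right fun hp =>
    exists_congr fun q => and_congr_right fun hq =>
      and_congr (forall₂_congr fun a ha => ?_) (forall₂_congr fun b hb => ?_))
  · exact odet_nonneg_iff_of_sign_eq hor (h₂ hp) (h₁ hq) (h₁ ha)
  · exact odet_nonneg_iff_of_sign_eq hor (h₁ hq) (h₂ hp) (h₂ hb)

theorem convexHull_disjoint_iff_of_orientation_preserving
    (P Q : Finset (Fin 2 → ℝ)) (hP : GenPos P) (hQ : GenPos Q)
    (σ : (Fin 2 → ℝ) → (Fin 2 → ℝ)) (hσ : Set.BijOn σ ↑P ↑Q)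
    (hor : ∀ x ∈ P, ∀ y ∈ P, ∀ z ∈ P, x ≠ y → x ≠ z → y ≠ z →
      Real.sign (odet x y z) = Real.sign (odet (σ x) (σ y) (σ z)))
    (P₁ P₂ : Set (Fin 2 → ℝ)) (h1 : P₁ ⊆ ↑P) (h2 : P₂ ⊆ ↑P) :
    convexHull ℝ P₁ ∩ convexHull ℝ P₂ = ∅ ↔
      convexHull ℝ (σ '' P₁) ∩ convexHull ℝ (σ '' P₂) = ∅ := by
  have himage : ∀ {S : Set (Fin 2 → ℝ)}, S ⊆ P → σ '' S ⊆ Q :=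
    fun hS => hσ.image_eq ▸ image_mono hS
  rw [← disjoint_iff_inter_eq_empty, ← disjoint_iff_inter_eq_empty,
    disjoint_convexHull_iff hP h1 h2, disjoint_convexHull_iff hQ (himage h1) (himage h2),
    image_eq_empty, image_eq_empty, lineSeparated_image_iff hσ.injOn hor h1 h2]
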